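/- arXiv:2010.03211 — 6 statements merged into one kernel-verified Lean document; each statement's English description precedes it below -/
import Mathlib

section
/- For real λ with 0 < λ ≤ 1/4, both complex roots of z² - z(1 + 2√λ i) + √λ i = 0 have modulus strictly less than 1. -/
open Complex

theorem roots_lt_one_small_lambda (lam : ℝ) (h0 : 0 < lam) (h1 : lam ≤ 1 / 4) (z : ℂ)
    (hz : z ^ 2 - z * (1 + 2 * (Real.sqrt lam : ℂ) * Complex.I) + (Real.sqrt lam : ℂ) * Complex.I = 0) :
    ‖z‖ < 1 := by
  set s : ℝ := Real.sqrt lam with hs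
  set t : ℝ := Real.sqrt (1 - 4 * lam) with ht
  have hs2 : s ^ 2 = lam := Real.sq_sqrt h0.le
  have ht0 : 0 ≤ t := Real.sqrt_nonneg _
  have ht2 : t ^ 2 = 1 - 4 * lam := Real.sq_sqrt (by linarith)
  have ht1 : t < 1 := by nlinarith
  have hs2c : (s : ℂ) ^ 2 = (lam : ℂ) := by exact_mod_cast congrArg Complex.ofReal hs2
  have ht2c : (t : ℂ) ^ 2 = 1 - 4 * (lam : ℂ) := by
    have := congrArg Complex.ofReal ht2; push_cast at this ⊢; exact this
  have hfac : (z - ((((1 + t) / 2 : ℝ) : ℂ) + s * Complex.I)) *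
      (z - ((((1 - t) / 2 : ℝ) : ℂ) + s * Complex.I)) = 0 := by
    push_cast
    linear_combination hz - (1/4 : ℂ) * ht2c - hs2c + (s : ℂ) ^ 2 * Complex.I_sq
  have key : ∀ a : ℝ, z = ((a : ℂ) + s * Complex.I) → a ^ 2 + s ^ 2 < 1 →
      ‖z‖ < 1 := by
    intro a hzeq hlt
    have h1' : ‖z‖ ^ 2 < 1 := by
      rw [Complex.sq_norm, hzeq, Complex.normSq_add_mul_I]
      exact hlt
    nlinarith [norm_nonneg z]
  rcases mul_eq_zero.1 hfac with h | h
  · exact key _ (sub_eq_zero.1 h) (by nlinarith)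
  · exact key _ (sub_eq_zero.1 h) (by nlinarith)
end

section
/- For real λ > 1/4, the root z₂ = (1 + 2√λ i - √(1-4λ))/2 of z² - z(1 + 2√λ i) + √λ i = 0 (with √(1-4λ) interpreted as i√(4λ-1)) satisfies |z₂| < 1; equivalently, √(2λ - √(λ(4λ-1))) < 1. -/
open Complex

theorem small_root_lt_one_large_lambda (lam : ℝ) (h : 1 / 4 < lam) :
    let z₂ : ℂ := (1 + (2 * (Real.sqrt lam : ℂ) - (Real.sqrt (4 * lam - 1) : ℂ)) * Complex.I) / 2
    ‖z₂‖ < 1 ∧ Real.sqrt (2 * lam - Real.sqrt (lam * (4 * lam - 1))) < 1 := by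
  intro z₂
  have hl : (0:ℝ) ≤ lam := by linarith
  have h4 : (0:ℝ) ≤ 4 * lam - 1 := by linarith
  have hmul : Real.sqrt lam * Real.sqrt (4 * lam - 1) = Real.sqrt (lam * (4 * lam - 1)) :=
    (Real.sqrt_mul hl _).symm
  have hsq1 : Real.sqrt lam ^ 2 = lam := Real.sq_sqrt hl
  have hsq2 : Real.sqrt (4 * lam - 1) ^ 2 = 4 * lam - 1 := Real.sq_sqrt h4
  have key : 2 * lam - 1 < Real.sqrt (lam * (4 * lam - 1)) := by
    rcases lt_or_ge (2 * lam - 1) 0 with hc | hc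
    · exact lt_of_lt_of_le hc (Real.sqrt_nonneg _)
    · rw [show (2*lam-1 : ℝ) = Real.sqrt ((2*lam-1)^2) from (Real.sqrt_sq hc).symm]
      apply Real.sqrt_lt_sqrt (by positivity)
      nlinarith
  have him : z₂.im = (2 * Real.sqrt lam - Real.sqrt (4 * lam - 1)) / 2 := by
    simp [z₂, Complex.div_im]
  have hre : z₂.re = 1 / 2 := by
    simp [z₂, Complex.div_re]
  constructor
  · rw [Complex.norm_def, Real.sqrt_lt' one_pos]
    rw [Complex.normSq_apply, hre, him]
    nlinarith [Real.sqrt_nonneg (lam * (4*lam-1))]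
  · rw [Real.sqrt_lt' one_pos]
    linarith
end

section
/- Let λ > 0. Every complex root of the quartic equation (z² - z)² + λ(2z - 1)² = 0 has modulus strictly less than 1 if and only if λ < 1/3. -/
open Complex

private lemma abs_lt_one_of (a b : ℝ) (hab : a ^ 2 + b ^ 2 < 1) :
    ‖((a : ℂ) + (b : ℂ) * I)‖ < 1 := by
  have h1 : ‖((a : ℂ) + (b : ℂ) * I)‖ ^ 2 = a ^ 2 + b ^ 2 := by
    rw [Complex.sq_norm, Complex.normSq_add_mul_I]
  nlinarith [norm_nonneg ((a : ℂ) + (b : ℂ) * I)]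

set_option maxHeartbeats 1000000 in
theorem quartic_stable_iff (lam : ℝ) (h : 0 < lam) :
    (∀ z : ℂ, (z ^ 2 - z) ^ 2 + (lam : ℂ) * (2 * z - 1) ^ 2 = 0 → ‖z‖ < 1) ↔
      lam < 1 / 3 := by
  set s : ℝ := Real.sqrt lam with hs_def
  have hs0 : 0 ≤ s := Real.sqrt_nonneg _
  have hs2 : s ^ 2 = lam := Real.sq_sqrt h.le
  have hsC : (s : ℂ) ^ 2 = (lam : ℂ) := by rw [← Complex.ofReal_pow, hs2]
  constructor
  · -- forward: contrapositive
    intro hall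
    by_contra hge
    push_neg at hge
    set u : ℝ := Real.sqrt (4 * lam - 1) with hu_def
    have hu0 : 0 ≤ u := Real.sqrt_nonneg _
    have hu2 : u ^ 2 = 4 * lam - 1 := Real.sq_sqrt (by linarith)
    have huC : (u : ℂ) ^ 2 = 4 * (lam : ℂ) - 1 := by
      rw [← Complex.ofReal_pow, hu2]; push_cast; ring
    set z₀ : ℂ := (1 + (2 * (s : ℂ) + (u : ℂ)) * I) / 2 with hz₀
    have hroot : (z₀ ^ 2 - z₀) ^ 2 + (lam : ℂ) * (2 * z₀ - 1) ^ 2 = 0 := by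
      rw [hz₀]
      linear_combination
        (((1 + (2 * (s:ℂ) + u) * I) / 2) ^ 2 - (1 - 2 * s * I) * ((1 + (2 * (s:ℂ) + u) * I) / 2) - s * I
          - (2 * ((1 + (2 * (s:ℂ) + u) * I) / 2) - 1) ^ 2) * hsC
        + (-(((1 + (2 * (s:ℂ) + u) * I) / 2) ^ 2 - (1 - 2 * s * I) * ((1 + (2 * (s:ℂ) + u) * I) / 2) - s * I) / 4) * huC
        + ((2 * ((1 + (2 * (s:ℂ) + u) * I) / 2) - 1) ^ 2 * (s:ℂ) ^ 2
          - (((1 + (2 * (s:ℂ) + u) * I) / 2) ^ 2 - (1 - 2 * s * I) * ((1 + (2 * (s:ℂ) + u) * I) / 2) - s * I)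
            * (4 * (s:ℂ) ^ 2 - (u:ℂ) ^ 2) / 4) * Complex.I_sq
    have habs : ‖z₀‖ ^ 2 = (1 / 2 : ℝ) ^ 2 + ((2 * s + u) / 2) ^ 2 := by
      have : z₀ = ((1 / 2 : ℝ) : ℂ) + (((2 * s + u) / 2 : ℝ) : ℂ) * I := by
        rw [hz₀]; push_cast; ring
      rw [this, Complex.sq_norm, Complex.normSq_add_mul_I]
    have hlt := hall z₀ hroot
    have hsu : 1 / 3 ≤ s * u := by
      have h9 : 1 / 9 ≤ s ^ 2 * u ^ 2 := by nlinarith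
      nlinarith [mul_nonneg hs0 hu0]
    nlinarith [norm_nonneg z₀]
  · -- reverse
    intro hlam z hz
    rcases le_or_gt lam (1 / 4) with hc | hc
    · set t : ℝ := Real.sqrt (1 - 4 * lam) with ht_def
      have ht0 : 0 ≤ t := Real.sqrt_nonneg _
      have ht2 : t ^ 2 = 1 - 4 * lam := Real.sq_sqrt (by linarith)
      have htC : (t : ℂ) ^ 2 = 1 - 4 * (lam : ℂ) := by
        rw [← Complex.ofReal_pow, ht2]; push_cast; ring
      have hfact : (z ^ 2 - z) ^ 2 + (lam : ℂ) * (2 * z - 1) ^ 2 =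
          ((z - ((1 + (t:ℂ)) / 2 + s * I)) * (z - ((1 - (t:ℂ)) / 2 + s * I))) *
          ((z - ((1 + (t:ℂ)) / 2 - s * I)) * (z - ((1 - (t:ℂ)) / 2 - s * I))) := by
        linear_combination
          ((z ^ 2 - (1 + 2 * (s:ℂ) * I) * z + s * I
              + (z - ((1 + (t:ℂ)) / 2 - s * I)) * (z - ((1 - (t:ℂ)) / 2 - s * I)))
            - (2 * z - 1) ^ 2) * hsC
          + ((z ^ 2 - (1 + 2 * (s:ℂ) * I) * z + s * I
              + (z - ((1 + (t:ℂ)) / 2 - s * I)) * (z - ((1 - (t:ℂ)) / 2 - s * I))) / 4) * htC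
          + ((2 * z - 1) ^ 2 * (s:ℂ) ^ 2
            - (z ^ 2 - (1 + 2 * (s:ℂ) * I) * z + s * I
              + (z - ((1 + (t:ℂ)) / 2 - s * I)) * (z - ((1 - (t:ℂ)) / 2 - s * I))) * (s:ℂ) ^ 2)
            * Complex.I_sq
      rw [hfact] at hz
      have habs1 : ((1 + t) / 2 : ℝ) ^ 2 + s ^ 2 < 1 := by nlinarith
      have habs2 : ((1 - t) / 2 : ℝ) ^ 2 + s ^ 2 < 1 := by nlinarith
      have habs2' : ((1 - t) / 2 : ℝ) ^ 2 + (-s) ^ 2 < 1 := by nlinarith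
      have habs1' : ((1 + t) / 2 : ℝ) ^ 2 + (-s) ^ 2 < 1 := by nlinarith
      rcases mul_eq_zero.mp hz with h' | h' <;> rcases mul_eq_zero.mp h' with h'' | h'' <;>
        rw [sub_eq_zero] at h'' <;> subst h''
      · have e : ((1 + (t:ℂ)) / 2 + (s:ℂ) * I) = (((1 + t) / 2 : ℝ) : ℂ) + ((s : ℝ) : ℂ) * I := by
          push_cast; ring
        rw [e]; exact abs_lt_one_of _ _ habs1
      · have e : ((1 - (t:ℂ)) / 2 + (s:ℂ) * I) = (((1 - t) / 2 : ℝ) : ℂ) + ((s : ℝ) : ℂ) * I := by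
          push_cast; ring
        rw [e]; exact abs_lt_one_of _ _ habs2
      · have e : ((1 + (t:ℂ)) / 2 - (s:ℂ) * I) = (((1 + t) / 2 : ℝ) : ℂ) + ((-s : ℝ) : ℂ) * I := by
          push_cast; ring
        rw [e]; exact abs_lt_one_of _ _ habs1'
      · have e : ((1 - (t:ℂ)) / 2 - (s:ℂ) * I) = (((1 - t) / 2 : ℝ) : ℂ) + ((-s : ℝ) : ℂ) * I := by
          push_cast; ring
        rw [e]; exact abs_lt_one_of _ _ habs2'
    · set u : ℝ := Real.sqrt (4 * lam - 1) with hu_def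
      have hu0 : 0 ≤ u := Real.sqrt_nonneg _
      have hu2 : u ^ 2 = 4 * lam - 1 := Real.sq_sqrt (by linarith)
      have huC : (u : ℂ) ^ 2 = 4 * (lam : ℂ) - 1 := by
        rw [← Complex.ofReal_pow, hu2]; push_cast; ring
      have hfact : (z ^ 2 - z) ^ 2 + (lam : ℂ) * (2 * z - 1) ^ 2 =
          ((z - (1 / 2 + ((2 * (s:ℂ) + u) / 2) * I)) * (z - (1 / 2 + ((2 * (s:ℂ) - u) / 2) * I))) *
          ((z - (1 / 2 + ((-2 * (s:ℂ) + u) / 2) * I)) * (z - (1 / 2 + ((-2 * (s:ℂ) - u) / 2) * I))) := by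
        linear_combination
          ((z ^ 2 - (1 + 2 * (s:ℂ) * I) * z + s * I
              + (z - (1 / 2 + ((-2 * (s:ℂ) + u) / 2) * I)) * (z - (1 / 2 + ((-2 * (s:ℂ) - u) / 2) * I)))
            - (2 * z - 1) ^ 2) * hsC
          + (-(z ^ 2 - (1 + 2 * (s:ℂ) * I) * z + s * I
              + (z - (1 / 2 + ((-2 * (s:ℂ) + u) / 2) * I)) * (z - (1 / 2 + ((-2 * (s:ℂ) - u) / 2) * I))) / 4) * huC
          + ((2 * z - 1) ^ 2 * (s:ℂ) ^ 2
            - (z ^ 2 - (1 + 2 * (s:ℂ) * I) * z + s * I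
              + (z - (1 / 2 + ((-2 * (s:ℂ) + u) / 2) * I)) * (z - (1 / 2 + ((-2 * (s:ℂ) - u) / 2) * I)))
              * (4 * (s:ℂ) ^ 2 - (u:ℂ) ^ 2) / 4) * Complex.I_sq
      rw [hfact] at hz
      have hsu : s * u < 1 - 2 * lam := by
        nlinarith [mul_nonneg hs0 hu0]
      have hb1 : ((1:ℝ) / 2) ^ 2 + ((2 * s + u) / 2) ^ 2 < 1 := by nlinarith [hsu, hs2, hu2]
      have hb2 : ((1:ℝ) / 2) ^ 2 + ((2 * s - u) / 2) ^ 2 < 1 := by nlinarith [hsu, hs2, hu2, mul_nonneg hs0 hu0]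
      have hb3 : ((1:ℝ) / 2) ^ 2 + ((-2 * s + u) / 2) ^ 2 < 1 := by nlinarith [hb2]
      have hb4 : ((1:ℝ) / 2) ^ 2 + ((-2 * s - u) / 2) ^ 2 < 1 := by nlinarith [hb1]
      rcases mul_eq_zero.mp hz with h' | h' <;> rcases mul_eq_zero.mp h' with h'' | h'' <;>
        rw [sub_eq_zero] at h'' <;> subst h''
      · have e : ((1:ℂ) / 2 + ((2 * (s:ℂ) + u) / 2) * I) =
            (((1:ℝ) / 2 : ℝ) : ℂ) + (((2 * s + u) / 2 : ℝ) : ℂ) * I := by push_cast; ring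
        rw [e]; exact abs_lt_one_of _ _ hb1
      · have e : ((1:ℂ) / 2 + ((2 * (s:ℂ) - u) / 2) * I) =
            (((1:ℝ) / 2 : ℝ) : ℂ) + (((2 * s - u) / 2 : ℝ) : ℂ) * I := by push_cast; ring
        rw [e]; exact abs_lt_one_of _ _ hb2
      · have e : ((1:ℂ) / 2 + ((-2 * (s:ℂ) + u) / 2) * I) =
            (((1:ℝ) / 2 : ℝ) : ℂ) + (((-2 * s + u) / 2 : ℝ) : ℂ) * I := by push_cast; ring
        rw [e]; exact abs_lt_one_of _ _ hb3
      · have e : ((1:ℂ) / 2 + ((-2 * (s:ℂ) - u) / 2) * I) =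
            (((1:ℝ) / 2 : ℝ) : ℂ) + (((-2 * s - u) / 2 : ℝ) : ℂ) * I := by push_cast; ring
        rw [e]; exact abs_lt_one_of _ _ hb4
end

section
/- Let A be an n×n real matrix, η ∈ ℝ, and B, C the block matrices B = [[I_n, -2ηA],[2ηAᵀ, I_n]] and C = [[0, ηA],[-ηAᵀ, 0]]. Then for all complex z, det(z² I_{2n} - zB - C) = det( (z²-z)² I_n + (2z-1)² η² A Aᵀ ). -/
open Matrix Complex

lemma aux_det_blocks {n : ℕ} (P : Matrix (Fin n) (Fin n) ℂ) (b : ℂ) :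
    ∀ a : ℂ, det (Matrix.fromBlocks (a • (1 : Matrix (Fin n) (Fin n) ℂ)) (b • P)
        ((-b) • Pᵀ) (a • (1 : Matrix (Fin n) (Fin n) ℂ))) =
      det ((a ^ 2) • (1 : Matrix (Fin n) (Fin n) ℂ) + (b ^ 2) • (P * Pᵀ)) := by
  have key : ∀ a : ℂ, a ≠ 0 → det (Matrix.fromBlocks (a • (1 : Matrix (Fin n) (Fin n) ℂ)) (b • P)
        ((-b) • Pᵀ) (a • (1 : Matrix (Fin n) (Fin n) ℂ))) =
      det ((a ^ 2) • (1 : Matrix (Fin n) (Fin n) ℂ) + (b ^ 2) • (P * Pᵀ)) := by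
    intro a ha
    haveI : Invertible (a • (1 : Matrix (Fin n) (Fin n) ℂ)) :=
      ⟨a⁻¹ • 1, by rw [smul_mul_smul_comm, inv_mul_cancel₀ ha, one_smul, one_mul],
        by rw [smul_mul_smul_comm, mul_inv_cancel₀ ha, one_smul, one_mul]⟩
    rw [Matrix.det_fromBlocks₂₂]
    have hinv : (⅟ (a • (1 : Matrix (Fin n) (Fin n) ℂ))) = a⁻¹ • 1 :=
      invOf_eq_right_inv (by rw [smul_mul_smul_comm, mul_inv_cancel₀ ha, one_smul, one_mul])
    rw [hinv]
    have h1 : (b • P) * (a⁻¹ • (1 : Matrix (Fin n) (Fin n) ℂ)) * ((-b) • Pᵀ)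
        = (-(b ^ 2) * a⁻¹) • (P * Pᵀ) := by
      simp only [Matrix.mul_smul, Matrix.smul_mul, Matrix.mul_one, smul_smul]
      congr 1
      ring
    rw [h1, sub_eq_add_neg, ← neg_smul, show -(-(b ^ 2) * a⁻¹) = b ^ 2 * a⁻¹ by ring]
    rw [Matrix.det_smul, det_one, mul_one, ← Matrix.det_smul]
    congr 1
    rw [smul_add, smul_smul, smul_smul, ← sq]
    congr 2
    field_simp
  intro a
  have hf : Continuous fun a : ℂ => det (Matrix.fromBlocks
      (a • (1 : Matrix (Fin n) (Fin n) ℂ)) (b • P) ((-b) • Pᵀ)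
      (a • (1 : Matrix (Fin n) (Fin n) ℂ))) := by
    apply Continuous.matrix_det
    apply Continuous.matrix_fromBlocks <;> fun_prop
  have hg : Continuous fun a : ℂ => det ((a ^ 2) • (1 : Matrix (Fin n) (Fin n) ℂ)
      + (b ^ 2) • (P * Pᵀ)) := by
    apply Continuous.matrix_det
    fun_prop
  have := hf.ext_on (dense_compl_singleton (0 : ℂ)) hg (fun x hx => key x hx)
  exact congrFun this a

theorem ogda_char_det {n : ℕ} (A : Matrix (Fin n) (Fin n) ℝ) (η : ℝ) (z : ℂ) :
    let Ac : Matrix (Fin n) (Fin n) ℂ := A.map (Complex.ofReal)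
    let B : Matrix (Fin n ⊕ Fin n) (Fin n ⊕ Fin n) ℂ :=
      Matrix.fromBlocks 1 ((-2 * (η : ℂ)) • Ac) ((2 * (η : ℂ)) • Acᵀ) 1
    let C : Matrix (Fin n ⊕ Fin n) (Fin n ⊕ Fin n) ℂ :=
      Matrix.fromBlocks 0 ((η : ℂ) • Ac) ((-(η : ℂ)) • Acᵀ) 0
    det (z ^ 2 • (1 : Matrix (Fin n ⊕ Fin n) (Fin n ⊕ Fin n) ℂ) - z • B - C) =
      det ((z ^ 2 - z) ^ 2 • (1 : Matrix (Fin n) (Fin n) ℂ) +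
        ((2 * z - 1) ^ 2 * (η : ℂ) ^ 2) • (Ac * Acᵀ)) := by
  intro Ac B C
  have hM : z ^ 2 • (1 : Matrix (Fin n ⊕ Fin n) (Fin n ⊕ Fin n) ℂ) - z • B - C =
      Matrix.fromBlocks ((z ^ 2 - z) • (1 : Matrix (Fin n) (Fin n) ℂ))
        (((2 * z - 1) * (η : ℂ)) • Ac) ((-((2 * z - 1) * (η : ℂ))) • Acᵀ)
        ((z ^ 2 - z) • (1 : Matrix (Fin n) (Fin n) ℂ)) := by
    ext i j
    rcases i with i | i <;> rcases j with j | j <;>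
      simp only [B, C, Matrix.sub_apply, Matrix.smul_apply, Matrix.fromBlocks_apply₁₁,
        Matrix.fromBlocks_apply₁₂, Matrix.fromBlocks_apply₂₁, Matrix.fromBlocks_apply₂₂,
        Matrix.one_apply, Matrix.zero_apply, smul_eq_mul, mul_ite, mul_one,
        mul_zero, Sum.inl.injEq, Sum.inr.injEq, reduceCtorEq, if_false, if_true] <;>
      (try split_ifs) <;> ring
  rw [hM, aux_det_blocks]
  congr 2
  rw [mul_pow]
end

section
/- Let A be an n×n invertible real matrix with spectral norm γ, and let η be real with η² γ² ≥ 1/3. Then the polynomial det( (z²-z)² I_n + (2z-1)² η² A Aᵀ ) has a complex root z with |z| ≥ 1. -/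
open Matrix Complex
open scoped RealInnerProductSpace
set_option maxHeartbeats 1000000

theorem ogda_unstable_of_large_lr {n : ℕ} (A : Matrix (Fin n) (Fin n) ℝ) (hA : IsUnit A.det)
    (η : ℝ) (hη : 1 / 3 ≤ η ^ 2 * ‖Matrix.toEuclideanCLM (𝕜 := ℝ) A‖ ^ 2) :
    ∃ z : ℂ, det ((z ^ 2 - z) ^ 2 • (1 : Matrix (Fin n) (Fin n) ℂ) +
        ((2 * z - 1) ^ 2 * (η : ℂ) ^ 2) • ((A * Aᵀ).map (Complex.ofReal))) = 0 ∧
      1 ≤ ‖z‖ := by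
  classical
  set E := EuclideanSpace ℝ (Fin n)
  set A' : E →L[ℝ] E := Matrix.toEuclideanCLM (𝕜 := ℝ) A with hA'
  -- basic positivity facts
  have hγpos : 0 < ‖A'‖ := by
    rcases (norm_nonneg A').lt_or_eq with h | h
    · exact h
    · exfalso
      rw [← h] at hη
      have h0 : η ^ 2 * (0:ℝ) ^ 2 = 0 := by ring
      linarith [hη.trans_eq h0]
  have hηne : η ≠ 0 := by
    intro h
    rw [h] at hη
    have h0 : (0:ℝ) ^ 2 * ‖A'‖ ^ 2 = 0 := by ring
    linarith [hη.trans_eq h0]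
  -- n is positive
  have hn : 0 < n := by
    by_contra hc
    push_neg at hc
    haveI : IsEmpty (Fin n) := ⟨fun i => absurd i.2 (by omega)⟩
    haveI : Subsingleton E := ⟨fun a b => by ext i; exact (IsEmpty.false i).elim⟩
    have : A' = 0 := by
      ext x i
      exact (IsEmpty.false i).elim
    rw [this, norm_zero] at hγpos
    exact lt_irrefl 0 hγpos
  haveI : Nonempty (Fin n) := ⟨⟨0, hn⟩⟩
  haveI : Nontrivial E := inferInstanceAs (Nontrivial (WithLp 2 (Fin n → ℝ)))
  -- a norm-attaining unit vector x₀
  obtain ⟨x₀, hx₀s, hmax⟩ :=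
    (isCompact_sphere (0 : E) 1).exists_isMaxOn
      (NormedSpace.sphere_nonempty.mpr zero_le_one)
      ((continuous_norm.comp A'.continuous).continuousOn
        (s := Metric.sphere (0 : E) 1))
  have hx₀ : ‖x₀‖ = 1 := mem_sphere_zero_iff_norm.mp hx₀s
  have hop : ‖A'‖ ≤ ‖A' x₀‖ := by
    refine A'.opNorm_le_bound (norm_nonneg _) fun x => ?_
    rcases eq_or_ne x 0 with rfl | hx
    · simp
    · have hxn : 0 < ‖x‖ := norm_pos_iff.mpr hx
      have hu : (‖x‖⁻¹ • x) ∈ Metric.sphere (0 : E) 1 := by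
        rw [mem_sphere_zero_iff_norm, norm_smul, norm_inv, norm_norm]
        field_simp
      have hux := hmax hu
      have hux' : ‖x‖⁻¹ * ‖A' x‖ ≤ ‖A' x₀‖ := by
        simpa [Function.comp, _root_.map_smul, norm_smul, _root_.abs_of_nonneg hxn.le] using hux
      calc ‖A' x‖ = ‖x‖ * (‖x‖⁻¹ * ‖A' x‖) := by field_simp
        _ ≤ ‖x‖ * ‖A' x₀‖ := mul_le_mul_of_nonneg_left hux' hxn.le
        _ = ‖A' x₀‖ * ‖x‖ := mul_comm _ _
  -- the symmetric operator AᵀA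
  set M₀ : Matrix (Fin n) (Fin n) ℝ := Aᵀ * A with hM₀
  set T' : E →L[ℝ] E := Matrix.toEuclideanCLM (𝕜 := ℝ) M₀ with hT'
  have hstar : star M₀ = M₀ := by
    rw [Matrix.star_eq_conjTranspose, Matrix.conjTranspose_eq_transpose_of_trivial,
      hM₀, Matrix.transpose_mul, Matrix.transpose_transpose]
  have hsa : _root_.IsSelfAdjoint T' := by
    show star T' = T'
    rw [hT', ← map_star, hstar]
  have hsym : LinearMap.IsSymmetric (T' : E →ₗ[ℝ] E) := hsa.isSymmetric
  -- the Rayleigh quotient identity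
  have hTA : ∀ x : E, ⟪T' x, x⟫ = ‖A' x‖ ^ 2 := by
    intro x
    have hAT : Aᵀ = star A := by
      rw [Matrix.star_eq_conjTranspose, Matrix.conjTranspose_eq_transpose_of_trivial]
    have h1 : T' = star A' * A' := by
      rw [hT', hM₀, hAT, _root_.map_mul, StarHomClass.map_star, hA']
    rw [h1]
    calc ⟪(star A' * A') x, x⟫ = ⟪(ContinuousLinearMap.adjoint A') (A' x), x⟫ := by
          rw [ContinuousLinearMap.star_eq_adjoint]; rfl
      _ = ⟪A' x, A' x⟫ := ContinuousLinearMap.adjoint_inner_left _ _ _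
      _ = ‖A' x‖ ^ 2 := real_inner_self_eq_norm_sq _
  -- the top eigenvalue
  set μ : ℝ := ⨆ x : { x : E // x ≠ 0 },
      RCLike.re ⟪(T' : E →ₗ[ℝ] E) x, (x : E)⟫ / ‖(x : E)‖ ^ 2 with hμ
  have heig : Module.End.HasEigenvalue (T' : E →ₗ[ℝ] E) μ := by
    have := hsym.hasEigenvalue_iSup_of_finiteDimensional
    exact this
  have hbdd : BddAbove (Set.range fun x : { x : E // x ≠ 0 } =>
      RCLike.re ⟪(T' : E →ₗ[ℝ] E) x, (x : E)⟫ / ‖(x : E)‖ ^ 2) := by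
    refine ⟨‖A'‖ ^ 2, ?_⟩
    rintro _ ⟨x, rfl⟩
    have hx : (0:ℝ) < ‖(x : E)‖ ^ 2 := by
      have := norm_pos_iff.mpr x.2
      positivity
    rw [div_le_iff₀ hx]
    have hle : ‖A' (x : E)‖ ≤ ‖A'‖ * ‖(x : E)‖ := A'.le_opNorm _
    simp only [ContinuousLinearMap.coe_coe, RCLike.re_to_real, hTA (x : E)]
    nlinarith [norm_nonneg (A' (x : E)), norm_nonneg A', norm_nonneg (x : E)]
  have hμγ : ‖A'‖ ^ 2 ≤ μ := by
    have hx₀ne : x₀ ≠ 0 := by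
      intro h; rw [h, norm_zero] at hx₀; norm_num at hx₀
    have hval : ‖A'‖ ^ 2 ≤
        RCLike.re ⟪(T' : E →ₗ[ℝ] E) ((⟨x₀, hx₀ne⟩ : { x : E // x ≠ 0 }) : E),
          ((⟨x₀, hx₀ne⟩ : { x : E // x ≠ 0 }) : E)⟫ /
          ‖((⟨x₀, hx₀ne⟩ : { x : E // x ≠ 0 }) : E)‖ ^ 2 := by
      simp only [ContinuousLinearMap.coe_coe, RCLike.re_to_real, hTA x₀, hx₀, one_pow, div_one]
      exact pow_le_pow_left₀ (norm_nonneg _) hop 2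
    exact hval.trans (le_ciSup hbdd _)
  -- eigenvector
  obtain ⟨v, hv⟩ := heig.exists_hasEigenvector
  have hvv : T' v = μ • v := hv.apply_eq_smul
  set w : Fin n → ℝ := WithLp.equiv 2 _ v with hw
  have hw0 : w ≠ 0 := by
    intro h
    apply hv.2
    have : WithLp.equiv 2 (Fin n → ℝ) v = WithLp.equiv 2 (Fin n → ℝ) 0 := by
      simpa [hw] using h
    exact (WithLp.equiv 2 (Fin n → ℝ)).injective this
  have hmv : M₀ *ᵥ w = μ • w := by
    have h := congrArg (WithLp.equiv 2 (Fin n → ℝ)) hvv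
    rw [hT'] at h
    rw [hw]; exact h
  -- transfer the eigenvalue to A Aᵀ
  set u : Fin n → ℝ := A *ᵥ w with hu
  have hu0 : u ≠ 0 := by
    intro h
    apply hw0
    have : A⁻¹ *ᵥ (A *ᵥ w) = 0 := by rw [← hu, h, Matrix.mulVec_zero]
    rwa [Matrix.mulVec_mulVec, Matrix.nonsing_inv_mul A hA, Matrix.one_mulVec] at this
  have heigu : (A * Aᵀ) *ᵥ u = μ • u := by
    rw [hu, Matrix.mulVec_mulVec, Matrix.mul_assoc, ← Matrix.mulVec_mulVec, ← hM₀, hmv,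
      Matrix.mulVec_smul]
  have hdetR : (A * Aᵀ - μ • 1).det = 0 := by
    rw [← Matrix.exists_mulVec_eq_zero_iff]
    refine ⟨u, hu0, ?_⟩
    rw [Matrix.sub_mulVec, heigu, Matrix.smul_mulVec, Matrix.one_mulVec, sub_self]
  have hdetC : ((A * Aᵀ).map (Complex.ofReal) - (μ : ℂ) • 1).det = 0 := by
    have hd := RingHom.map_det Complex.ofRealHom (A * Aᵀ - μ • 1)
    rw [hdetR, map_zero] at hd
    have hmap : Complex.ofRealHom.mapMatrix (A * Aᵀ - μ • 1) =
        (A * Aᵀ).map (Complex.ofReal) - (μ : ℂ) • 1 := by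
      ext i j
      simp only [RingHom.mapMatrix_apply, Matrix.map_apply, Matrix.sub_apply, Matrix.smul_apply,
        Matrix.one_apply, smul_eq_mul, Complex.ofRealHom_eq_coe]
      push_cast
      split_ifs <;> simp
    rw [hmap] at hd
    exact hd.symm
  -- scalar bookkeeping
  have hμpos : 0 < μ := lt_of_lt_of_le (by positivity) hμγ
  have hμ3 : 1 / 3 ≤ η ^ 2 * μ :=
    hη.trans (mul_le_mul_of_nonneg_left hμγ (sq_nonneg η))
  clear hdetR heigu hu0 hw0 hmv hvv hv heig hbdd hμγ hμ
  clear_value μ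
  clear hu u hw w v hTA hsym hsa hT' T' hstar hM₀ M₀ hop hmax hx₀ hx₀s x₀ hγpos hη hA' A'
  obtain ⟨a, ha2, hapos⟩ : ∃ a : ℝ, a ^ 2 = η ^ 2 * μ ∧ 0 < a := by
    refine ⟨|η| * Real.sqrt μ, ?_, mul_pos (abs_pos.mpr hηne) (Real.sqrt_pos.mpr hμpos)⟩
    rw [mul_pow, _root_.sq_abs, Real.sq_sqrt hμpos.le]
  have ha3 : 1 / 3 ≤ a ^ 2 := by rw [ha2]; exact hμ3
  obtain ⟨s, hs2, hs0⟩ : ∃ s : ℝ, s ^ 2 = a ^ 2 - 1/4 ∧ 0 ≤ s :=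
    ⟨Real.sqrt (a ^ 2 - 1/4), Real.sq_sqrt (by linarith), Real.sqrt_nonneg _⟩
  obtain ⟨b, hbb⟩ : ∃ b : ℝ, b = a + s := ⟨a + s, rfl⟩
  have hbpos : 0 < b := by rw [hbb]; linarith
  have hkey : b ^ 2 + 1/4 = 2 * a * b := by
    rw [hbb]; linear_combination hs2
  have has : 1/6 ≤ a * s := by
    nlinarith [mul_nonneg hapos.le hs0, hs2, ha3, sq_nonneg (a ^ 2 - 1/3)]
  have hb2 : 3/4 ≤ b ^ 2 := by
    rw [hbb]; nlinarith [hs2, ha3, has]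
  have hc1R : (b ^ 2 + 1/4) ^ 2 = 4 * b ^ 2 * η ^ 2 * μ := by
    calc (b ^ 2 + 1/4) ^ 2 = (2 * a * b) ^ 2 := by rw [hkey]
      _ = 4 * b ^ 2 * a ^ 2 := by ring
      _ = 4 * b ^ 2 * η ^ 2 * μ := by rw [ha2]; ring
  -- the root
  refine ⟨(1/2 : ℂ) + (b : ℂ) * Complex.I, ?_, ?_⟩
  · set z : ℂ := (1/2 : ℂ) + (b : ℂ) * Complex.I with hz
    have h1 : z ^ 2 - z = -((b : ℂ) ^ 2 + 1/4) := by
      rw [hz]; linear_combination (b : ℂ) ^ 2 * Complex.I_sq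
    have h2 : (2 * z - 1) ^ 2 = -(4 * (b : ℂ) ^ 2) := by
      rw [hz]; linear_combination 4 * (b : ℂ) ^ 2 * Complex.I_sq
    have hc1C : ((b : ℂ) ^ 2 + 1/4) ^ 2 = 4 * (b : ℂ) ^ 2 * (η : ℂ) ^ 2 * (μ : ℂ) := by
      have := congrArg (Complex.ofReal) hc1R
      push_cast at this
      exact this
    have hmateq : (z ^ 2 - z) ^ 2 • (1 : Matrix (Fin n) (Fin n) ℂ) +
        ((2 * z - 1) ^ 2 * (η : ℂ) ^ 2) • ((A * Aᵀ).map (Complex.ofReal)) =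
        (-(4 * (b : ℂ) ^ 2 * (η : ℂ) ^ 2)) •
          ((A * Aᵀ).map (Complex.ofReal) - (μ : ℂ) • 1) := by
      rw [h1, h2, neg_pow, neg_one_sq, one_mul, hc1C]
      module
    rw [hmateq, Matrix.det_smul, hdetC, mul_zero]
  · have hnormSq : (1 : ℝ) ≤ Complex.normSq ((1/2 : ℂ) + (b : ℂ) * Complex.I) := by
      rw [Complex.normSq_apply]
      simp only [Complex.add_re, Complex.add_im, Complex.mul_re, Complex.mul_im,
        Complex.I_re, Complex.I_im, Complex.ofReal_re, Complex.ofReal_im]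
      norm_num
      nlinarith [hb2]
    calc (1 : ℝ) = Real.sqrt 1 := Real.sqrt_one.symm
      _ ≤ Real.sqrt (Complex.normSq ((1/2 : ℂ) + (b : ℂ) * Complex.I)) :=
          Real.sqrt_le_sqrt hnormSq
      _ = ‖(1/2 : ℂ) + (b : ℂ) * Complex.I‖ := (Complex.norm_def _).symm
end

section
/- For λ = 1/4 (the game f(x,y) = xy with learning rate η = 1/2), all four roots of (z²-z)² + (1/4)(2z-1)² = 0 have modulus √2/2, and this common modulus √(2λ + √(λ(4λ-1))) ∨ √(2+2√(1-4λ))/2 is minimized over λ > 0 exactly at λ = 1/4. -/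
open Complex

/-- The maximum root modulus of the OGDA characteristic quartic
`(z² - z)² + λ(2z - 1)² = 0` as a function of the eigenvalue `λ > 0`. -/
noncomputable def ogdaRate (lam : ℝ) : ℝ :=
  if lam ≤ 1 / 4 then Real.sqrt (2 + 2 * Real.sqrt (1 - 4 * lam)) / 2
  else Real.sqrt (2 * lam + Real.sqrt (lam * (4 * lam - 1)))

lemma sqrt_half : Real.sqrt (1 / 2) = Real.sqrt 2 / 2 := by
  rw [show (1/2:ℝ) = 2 / 2 ^ 2 by norm_num, Real.sqrt_div' 2 (by norm_num),
    Real.sqrt_sq (by norm_num : (0:ℝ) ≤ 2)]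

lemma abs_half (s : ℝ) : ‖(1 + s * I) / 2‖ = Real.sqrt (1 + s^2) / 2 := by
  rw [norm_div, Complex.norm_two, Complex.norm_def]
  congr 1
  simp [Complex.normSq_apply]
  ring

lemma rate_quarter : ogdaRate (1 / 4) = Real.sqrt 2 / 2 := by
  unfold ogdaRate
  rw [if_pos le_rfl]
  norm_num

theorem optimal_rate_at_quarter :
    (∀ z : ℂ, (z ^ 2 - z) ^ 2 + (1 / 4 : ℂ) * (2 * z - 1) ^ 2 = 0 →
        ‖z‖ = Real.sqrt 2 / 2) ∧
      (∀ lam : ℝ, 0 < lam → ogdaRate (1 / 4) ≤ ogdaRate lam ∧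
        (ogdaRate lam = ogdaRate (1 / 4) → lam = 1 / 4)) := by
  constructor
  · intro z hz
    have hfac : (z - (1 + I) / 2) ^ 2 * (z - (1 - I) / 2) ^ 2 = 0 := by
      have hI : I ^ 2 = -1 := Complex.I_sq
      linear_combination hz + (-(z - 1/2)^2/2 + (I^2 - 1)/16) * hI
    rcases mul_eq_zero.1 hfac with h | h <;>
      rw [pow_eq_zero_iff (by norm_num), sub_eq_zero] at h <;> subst h
    · rw [norm_div, Complex.norm_two, Complex.norm_def]
      norm_num [Complex.normSq_apply]
    · rw [norm_div, Complex.norm_two, Complex.norm_def]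
      norm_num [Complex.normSq_apply]
  · intro lam hlam
    have h0 : ogdaRate (1/4) = Real.sqrt 2 / 2 := rate_quarter
    by_cases h : lam ≤ 1 / 4
    · have hs : 0 ≤ Real.sqrt (1 - 4 * lam) := Real.sqrt_nonneg _
      have hr : ogdaRate lam = Real.sqrt (2 + 2 * Real.sqrt (1 - 4 * lam)) / 2 := by
        unfold ogdaRate; rw [if_pos h]
      constructor
      · rw [h0, hr]
        gcongr
        · linarith
      · intro heq
        rw [hr, h0, div_left_inj' (by norm_num)] at heq
        have h2 : (2:ℝ) + 2 * Real.sqrt (1 - 4 * lam) = 2 := by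
          have := congrArg (· ^ 2) heq
          rw [Real.sq_sqrt (by linarith), Real.sq_sqrt (by norm_num)] at this
          exact this
        have hz : Real.sqrt (1 - 4 * lam) = 0 := by linarith
        have : 1 - 4 * lam ≤ 0 := by
          by_contra hc
          push_neg at hc
          exact absurd hz (ne_of_gt (Real.sqrt_pos.2 hc))
        linarith
    · push_neg at h
      have hr : ogdaRate lam = Real.sqrt (2 * lam + Real.sqrt (lam * (4 * lam - 1))) := by
        unfold ogdaRate; rw [if_neg (not_le.2 h)]
      have hs : 0 ≤ Real.sqrt (lam * (4 * lam - 1)) := Real.sqrt_nonneg _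
      have hlt : Real.sqrt 2 / 2 < ogdaRate lam := by
        rw [hr, ← sqrt_half]
        exact Real.sqrt_lt_sqrt (by norm_num) (by linarith)
      refine ⟨by rw [h0]; linarith, fun heq => ?_⟩
      rw [h0] at heq; linarith [hlt.trans_eq heq]
end
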